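/- The coproduct and counit of H1 are multiplicative with respect to the second product ∘: for all x, y ∈ H1, Δ(x∘y) = (x_(1)∘y_(1)) ⊗ (x_(2)∘y_(2)) (i.e. Δ∘∘ = (∘⊗∘)∘(id⊗τ⊗id)∘(Δ⊗Δ), where τ is the flip), and ε(x∘y) = ε(x)ε(y). (Part of Theorem 2.6.) -/
import Mathlib


open TensorProduct

noncomputable section

variable (k A H : Type*) [Field k] [Ring A] [Ring H]
  [HopfAlgebra k A] [HopfAlgebra k H]

/-- `t(a⊗h) = d(a)h`. -/
def tmap (d : A →ₗ[k] H) : A ⊗[k] H →ₗ[k] H :=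
  LinearMap.mul' k H ∘ₗ map d LinearMap.id

/-- `s(a⊗h) = ε(a)h`. -/
def smap : A ⊗[k] H →ₗ[k] H :=
  (TensorProduct.lid k H).toLinearMap ∘ₗ map (Coalgebra.counit : A →ₗ[k] k) LinearMap.id

/-- `i(h) = 1⊗h`. -/
def imap : H →ₗ[k] A ⊗[k] H := TensorProduct.mk k A H 1

/-- The tensor-product coproduct `Δ(a⊗h) = (a₁⊗h₁) ⊗ (a₂⊗h₂)` on `H1 = A ⊗ H`. -/
def comul1 : A ⊗[k] H →ₗ[k] (A ⊗[k] H) ⊗[k] (A ⊗[k] H) :=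
  (tensorTensorTensorComm k A A H H).toLinearMap ∘ₗ
    map (Coalgebra.comul : A →ₗ[k] A ⊗[k] A) (Coalgebra.comul : H →ₗ[k] H ⊗[k] H)

/-- The tensor-product counit `ε(a⊗h) = ε(a)ε(h)` on `H1 = A ⊗ H`. -/
def counit1 : A ⊗[k] H →ₗ[k] k :=
  (TensorProduct.lid k k).toLinearMap ∘ₗ
    map (Coalgebra.counit : A →ₗ[k] k) (Coalgebra.counit : H →ₗ[k] k)

/-- The left coaction `DL = (t⊗id)Δ`. -/
def DLmap (d : A →ₗ[k] H) : A ⊗[k] H →ₗ[k] H ⊗[k] (A ⊗[k] H) :=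
  map (tmap k A H d) LinearMap.id ∘ₗ comul1 k A H

/-- The right coaction `DR = (id⊗s)Δ`. -/
def DRmap : A ⊗[k] H →ₗ[k] (A ⊗[k] H) ⊗[k] H :=
  map LinearMap.id (smap k A H) ∘ₗ comul1 k A H

/-- The second product `(a⊗h)∘(b⊗g) = ε(h) ab ⊗ g`. -/
def circ : (A ⊗[k] H) ⊗[k] (A ⊗[k] H) →ₗ[k] A ⊗[k] H :=
  map (LinearMap.mul' k A)
      ((TensorProduct.lid k H).toLinearMap ∘ₗ map (Coalgebra.counit : H →ₗ[k] k) LinearMap.id)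
    ∘ₗ (tensorTensorTensorComm k A H A H).toLinearMap

/-- The quantum groupoid antipode `𝒮(a⊗h) = S(a₁) ⊗ d(a₂)h`. -/
def SS (d : A →ₗ[k] H) : A ⊗[k] H →ₗ[k] A ⊗[k] H :=
  map (HopfAlgebra.antipode (R := k) : A →ₗ[k] A) (tmap k A H d)
    ∘ₗ (TensorProduct.assoc k A A H).toLinearMap
    ∘ₗ map (Coalgebra.comul : A →ₗ[k] A ⊗[k] A) LinearMap.id

/-- The smash product multiplication `(a⊗h)(b⊗g) = a(h₁▷b) ⊗ h₂g`. -/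
def smashMul (act : H ⊗[k] A →ₗ[k] A) :
    (A ⊗[k] H) ⊗[k] (A ⊗[k] H) →ₗ[k] A ⊗[k] H :=
  map (LinearMap.mul' k A) LinearMap.id
  ∘ₗ (TensorProduct.assoc k A A H).symm.toLinearMap
  ∘ₗ map LinearMap.id
      (map act (LinearMap.mul' k H)
        ∘ₗ (tensorTensorTensorComm k H H A H).toLinearMap)
  ∘ₗ (TensorProduct.assoc k A (H ⊗[k] H) (A ⊗[k] H)).toLinearMap
  ∘ₗ map (map LinearMap.id (Coalgebra.comul : H →ₗ[k] H ⊗[k] H)) LinearMap.id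

/-- The cotensor product `H1□H1`. -/
def cot (d : A →ₗ[k] H) : Set ((A ⊗[k] H) ⊗[k] (A ⊗[k] H)) :=
  {x | (TensorProduct.assoc k (A ⊗[k] H) H (A ⊗[k] H)).toLinearMap
        (map (DRmap k A H) LinearMap.id x) = map LinearMap.id (DLmap k A H d) x}

/-- A Hopf (algebra) crossed module. -/
structure HopfCrossedModule (act : H ⊗[k] A →ₗ[k] A) (d : A →ₗ[k] H) : Prop where
  /-- `(hg)▷a = h▷(g▷a)` -/
  act_mul : ∀ (h g : H) (a : A), act ((h * g) ⊗ₜ[k] a) = act (h ⊗ₜ[k] act (g ⊗ₜ[k] a))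
  /-- `1▷a = a` -/
  act_one : ∀ a : A, act ((1 : H) ⊗ₜ[k] a) = a
  /-- `h▷(ab) = (h₁▷a)(h₂▷b)` -/
  act_mul_alg : act ∘ₗ map LinearMap.id (LinearMap.mul' k A)
      = LinearMap.mul' k A ∘ₗ map act act
          ∘ₗ (tensorTensorTensorComm k H H A A).toLinearMap
          ∘ₗ map (Coalgebra.comul : H →ₗ[k] H ⊗[k] H) LinearMap.id
  /-- `h▷1 = ε(h)1` -/
  act_unit : ∀ h : H, act (h ⊗ₜ[k] (1 : A)) = (Coalgebra.counit h : k) • (1 : A)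
  /-- `Δ(h▷a) = (h₁▷a₁)⊗(h₂▷a₂)` -/
  act_comul : (Coalgebra.comul : A →ₗ[k] A ⊗[k] A) ∘ₗ act
      = map act act ∘ₗ (tensorTensorTensorComm k H H A A).toLinearMap
          ∘ₗ map (Coalgebra.comul : H →ₗ[k] H ⊗[k] H) (Coalgebra.comul : A →ₗ[k] A ⊗[k] A)
  /-- `ε(h▷a) = ε(h)ε(a)` -/
  act_counit : ∀ (h : H) (a : A),
      (Coalgebra.counit (act (h ⊗ₜ[k] a)) : k) = Coalgebra.counit h * Coalgebra.counit a
  /-- `h₁ ⊗ (h₂▷a) = h₂ ⊗ (h₁▷a)` -/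
  act_cocomm : map LinearMap.id act ∘ₗ (TensorProduct.assoc k H H A).toLinearMap
        ∘ₗ map (Coalgebra.comul : H →ₗ[k] H ⊗[k] H) LinearMap.id
      = map LinearMap.id act ∘ₗ (TensorProduct.assoc k H H A).toLinearMap
        ∘ₗ map ((TensorProduct.comm k H H).toLinearMap
              ∘ₗ (Coalgebra.comul : H →ₗ[k] H ⊗[k] H)) LinearMap.id
  /-- `d` is multiplicative -/
  d_mul : ∀ a b : A, d (a * b) = d a * d b
  /-- `d(1) = 1` -/
  d_one : d 1 = 1
  /-- `d` is comultiplicative -/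
  d_comul : (Coalgebra.comul : H →ₗ[k] H ⊗[k] H) ∘ₗ d
      = map d d ∘ₗ (Coalgebra.comul : A →ₗ[k] A ⊗[k] A)
  /-- `ε∘d = ε` -/
  d_counit : (Coalgebra.counit : H →ₗ[k] k) ∘ₗ d = (Coalgebra.counit : A →ₗ[k] k)
  /-- `d(h▷a) = h₁ d(a) S(h₂)` -/
  d_act : d ∘ₗ act = LinearMap.mul' k H
      ∘ₗ map LinearMap.id (LinearMap.mul' k H
            ∘ₗ map LinearMap.id (HopfAlgebra.antipode (R := k) : H →ₗ[k] H)
            ∘ₗ (TensorProduct.comm k H H).toLinearMap)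
      ∘ₗ (TensorProduct.assoc k H H H).toLinearMap
      ∘ₗ map (Coalgebra.comul : H →ₗ[k] H ⊗[k] H) d
  /-- `d(a)▷b = a₁ b S(a₂)` -/
  crossed : act ∘ₗ map d LinearMap.id = LinearMap.mul' k A
      ∘ₗ map LinearMap.id (LinearMap.mul' k A
            ∘ₗ map LinearMap.id (HopfAlgebra.antipode (R := k) : A →ₗ[k] A)
            ∘ₗ (TensorProduct.comm k A A).toLinearMap)
      ∘ₗ (TensorProduct.assoc k A A A).toLinearMap
      ∘ₗ map (Coalgebra.comul : A →ₗ[k] A ⊗[k] A) LinearMap.id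


set_option maxHeartbeats 1000000 in
set_option synthInstance.maxHeartbeats 200000 in
set_option maxRecDepth 8000 in
/-- Theorem 2.6 (part): the coproduct and counit of `H1` are multiplicative with respect
to the second product `∘`: `Δ(x∘y) = (x₁∘y₁)⊗(x₂∘y₂)` and `ε(x∘y) = ε(x)ε(y)`. -/
theorem statement2 (act : H ⊗[k] A →ₗ[k] A) (d : A →ₗ[k] H)
    (hcm : HopfCrossedModule k A H act d) :
    comul1 k A H ∘ₗ circ k A H
      = map (circ k A H) (circ k A H)
          ∘ₗ (tensorTensorTensorComm k (A ⊗[k] H) (A ⊗[k] H) (A ⊗[k] H) (A ⊗[k] H)).toLinearMap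
          ∘ₗ map (comul1 k A H) (comul1 k A H)
    ∧ counit1 k A H ∘ₗ circ k A H
      = (TensorProduct.lid k k).toLinearMap ∘ₗ map (counit1 k A H) (counit1 k A H) := by
  constructor
  · ext a h b g
    simp [comul1, circ, counit1, tmap, smap]
    have hz : ∀ z : H ⊗[k] H,
        (TensorProduct.lid k k) (map (Coalgebra.counit : H →ₗ[k] k) Coalgebra.counit z)
        = (Coalgebra.counit : H →ₗ[k] k) ((TensorProduct.lid k H)
            ((Coalgebra.counit : H →ₗ[k] k).rTensor H z)) := by
      intro z
      induction z using TensorProduct.induction_on with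
      | zero => simp
      | tmul p q => simp
      | add u v hu hv => simp [hu, hv]
    have hh : (Coalgebra.counit h : k)
        = (TensorProduct.lid k k)
            (map (Coalgebra.counit : H →ₗ[k] k) Coalgebra.counit (Coalgebra.comul h)) := by
      rw [hz, Coalgebra.rTensor_counit_comul]; simp
    rw [hh]
    generalize (Coalgebra.comul h : H ⊗[k] H) = z
    generalize (Coalgebra.comul a : A ⊗[k] A) = x
    generalize (Coalgebra.comul b : A ⊗[k] A) = y
    generalize (Coalgebra.comul g : H ⊗[k] H) = w
    induction z using TensorProduct.induction_on with
    | zero => simp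
    | add u v hu hv => simp only [map_add, LinearEquiv.map_add, add_smul, TensorProduct.add_tmul, TensorProduct.tmul_add, hu, hv]
    | tmul h1 h2 =>
      induction x using TensorProduct.induction_on with
      | zero => simp
      | add u v hu hv =>
        simp only [map_add, LinearEquiv.map_add, add_mul, TensorProduct.add_tmul,
          TensorProduct.tmul_add, smul_add, hu, hv]
      | tmul a1 a2 =>
        induction y using TensorProduct.induction_on with
        | zero => simp
        | add u v hu hv =>
          simp only [map_add, LinearEquiv.map_add, mul_add, TensorProduct.add_tmul,
            TensorProduct.tmul_add, smul_add, hu, hv]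
        | tmul b1 b2 =>
          induction w using TensorProduct.induction_on with
          | zero => simp
          | add u v hu hv =>
            simp only [map_add, LinearEquiv.map_add, TensorProduct.add_tmul,
              TensorProduct.tmul_add, smul_add, hu, hv]
          | tmul g1 g2 =>
            simp only [Algebra.TensorProduct.tmul_mul_tmul, map_tmul,
              tensorTensorTensorComm_tmul, LinearMap.coe_comp, Function.comp_apply,
              LinearMap.id_coe, id_eq, lid_tmul, LinearMap.mul'_apply,
              TensorProduct.smul_tmul', TensorProduct.tmul_smul, smul_smul]
            simp [LinearEquiv.coe_coe, tensorTensorTensorComm_tmul,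
              TensorProduct.smul_tmul, TensorProduct.tmul_smul, smul_smul, mul_comm]
  · ext a h b g
    simp [comul1, circ, counit1]
    ring

end
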